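/- Each virtual root function ρ_{d,j}, viewed as a function from ℝ^d (the space of monic degree-d polynomials, parametrized by coefficients) to ℝ, is continuous. -/

import Mathlib

open Polynomial Set

noncomputable def monicPoly (d : ℕ) (c : Fin d → ℝ) : Polynomial ℝ :=
  X ^ d + ∑ i : Fin d, C (c i) * X ^ (i : ℕ)

noncomputable def dCoeff {d : ℕ} (c : Fin (d + 1) → ℝ) : Fin d → ℝ :=
  fun i => c i.succ * ((i : ℕ) + 1) / (d + 1)

noncomputable def bnd {d : ℕ} (c : Fin d → ℝ) : ℝ := 1 + ⨆ i, |c i|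

/-- The point of `[a,b]` where `|P|` attains its minimum. -/
noncomputable def Rmin (a b : ℝ) (P : Polynomial ℝ) : ℝ :=
  if h : a ≤ b then
    (isCompact_Icc.exists_isMinOn (Set.nonempty_Icc.mpr h)
      ((continuous_abs.comp P.continuous).continuousOn)).choose
  else a

/-- The `j`-th virtual root of the monic polynomial with coefficient vector `c`,
defined inductively as the minimizer of `|P|` between consecutive virtual roots
of `P/d`, infinite endpoints being handled by the Cauchy root bound `bnd`. -/
noncomputable def vroot : (d : ℕ) → ℤ → (Fin d → ℝ) → ℝ
  | 0, _, _ => 0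
  | d + 1, j, c =>
    Rmin (if 1 < j then vroot d (j - 1) (dCoeff c) else -(bnd c))
      (if j < (d : ℤ) + 1 then vroot d j (dCoeff c) else bnd c)
      (monicPoly (d + 1) c)

/-!
By induction on `d`, the virtual roots lie in the Cauchy interval `[-bnd c, bnd c]` and are
nondecreasing in `j`, and `P` has the strict sign `(-1)^(d-j)` strictly between `ρ_{d,j}` and
`ρ_{d,j+1}`. Applied to `Q = P'/(d+1)`, the sign property makes `±P` strictly increasing on the
interval `[ρ_{d,j-1}(Q), ρ_{d,j}(Q)]` over which `ρ_{d+1,j}(P)` minimizes `|P|`, so that minimizer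
is unique. The unique minimizer of a jointly continuous function over an interval whose endpoints
move continuously depends continuously on the parameter; since the endpoints are continuous by
induction (or are `±bnd c`), so is `ρ_{d+1,j}`.
-/

open Filter Topology

theorem MapClusterPt.prodMk_of_tendsto {α X Y : Type*} [TopologicalSpace X] [TopologicalSpace Y]
    {l : Filter α} {f : α → X} {g : α → Y} {x : X} {y : Y} (hf : Tendsto f l (𝓝 x))
    (hg : MapClusterPt y l g) : MapClusterPt (x, y) l fun a => (f a, g a) := by
  rw [mapClusterPt_iff_frequently] at hg ⊢
  intro s hs
  obtain ⟨u, hu, v, hv, huv⟩ := mem_nhds_prod_iff.1 hs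
  exact ((hg v hv).and_eventually (hf hu)).mono fun a ha => huv ⟨ha.2, ha.1⟩

/-- A form of Berge's maximum theorem. -/
theorem continuous_of_unique_isMinOn_Icc {X : Type*} [TopologicalSpace X] {a b g : X → ℝ}
    {F : X → ℝ → ℝ} (hF : Continuous (Function.uncurry F)) (ha : Continuous a)
    (hb : Continuous b) (hg : ∀ x, g x ∈ Icc (a x) (b x))
    (hmin : ∀ x, IsMinOn (F x) (Icc (a x) (b x)) (g x))
    (huniq : ∀ x y, y ∈ Icc (a x) (b x) → IsMinOn (F x) (Icc (a x) (b x)) y → y = g x) :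
    Continuous g := by
  refine continuous_iff_continuousAt.2 fun x₀ => ?_
  have hK : ∀ᶠ x in 𝓝 x₀, g x ∈ Icc (a x₀ - 1) (b x₀ + 1) := by
    filter_upwards [(ha.tendsto x₀).eventually (lt_mem_nhds (sub_one_lt (a x₀))),
      (hb.tendsto x₀).eventually (gt_mem_nhds (lt_add_one (b x₀)))] with x h₁ h₂
    exact ⟨h₁.le.trans (hg x).1, (hg x).2.trans h₂.le⟩
  refine isCompact_Icc.tendsto_nhds_of_unique_mapClusterPt hK fun y _ hy => ?_
  have hgraph : ∀ S : Set (X × ℝ), IsClosed S → (∀ x, (x, g x) ∈ S) → (x₀, y) ∈ S :=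
    fun S hS hgS => hS.mem_of_mapClusterPt (hy.prodMk_of_tendsto tendsto_id)
      (Eventually.of_forall hgS)
  refine huniq x₀ y (hgraph _ ((isClosed_le (ha.comp continuous_fst) continuous_snd).inter
    (isClosed_le continuous_snd (hb.comp continuous_fst))) hg) (isMinOn_iff.2 fun z hz => ?_)
  -- `z` clamped into the moving interval `[a x, b x]`
  let w : X → ℝ := fun x => max (a x) (min z (b x))
  have hw : Continuous w := ha.max (continuous_const.min hb)
  have hzS := hgraph {p | F p.1 p.2 ≤ F p.1 (w p.1)}
    (isClosed_le hF (hF.comp (continuous_fst.prodMk (hw.comp continuous_fst))))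
    fun x => isMinOn_iff.1 (hmin x) (w x)
      ⟨le_max_left _ _, max_le ((hg x).1.trans (hg x).2) (min_le_right _ _)⟩
  simpa [w, min_eq_left hz.2, max_eq_right hz.1] using hzS

section StrictMonoOn

variable {α : Type*} {f : α → ℝ} {s : Set α} {m x : α}

theorem StrictMonoOn.pos_of_isMinOn_abs [Preorder α] (hf : StrictMonoOn f s) (hm : m ∈ s)
    (hmin : IsMinOn (fun x => |f x|) s m) (hx : x ∈ s) (hmx : m < x) : 0 < f x := by
  by_contra! h
  have hlt := hf hm hx hmx
  have := isMinOn_iff.1 hmin x hx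
  rw [abs_of_nonpos h, abs_of_neg (hlt.trans_le h)] at this
  linarith

theorem StrictMonoOn.neg_of_isMinOn_abs [Preorder α] (hf : StrictMonoOn f s) (hm : m ∈ s)
    (hmin : IsMinOn (fun x => |f x|) s m) (hx : x ∈ s) (hxm : x < m) : f x < 0 := by
  by_contra! h
  have hlt := hf hx hm hxm
  have := isMinOn_iff.1 hmin x hx
  rw [abs_of_nonneg h, abs_of_pos (h.trans_lt hlt)] at this
  linarith

theorem StrictMonoOn.eq_of_isMinOn_abs [LinearOrder α] [DenselyOrdered α] [s.OrdConnected]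
    (hf : StrictMonoOn f s) {u v : α} (hu : u ∈ s) (hv : v ∈ s)
    (hmu : IsMinOn (fun x => |f x|) s u) (hmv : IsMinOn (fun x => |f x|) s v) : u = v := by
  by_contra hne
  wlog huv : u < v generalizing u v
  · exact this hv hu hmv hmu (Ne.symm hne) (lt_of_le_of_ne (not_lt.1 huv) (Ne.symm hne))
  -- `|f|` cannot be minimal at both ends of `[u, v]`: it is smaller at an interior point.
  obtain ⟨w, huw, hwv⟩ := exists_between huv
  have hw : w ∈ s := Set.OrdConnected.out ‹_› hu hv ⟨huw.le, hwv.le⟩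
  rcases le_or_gt 0 (f w) with h | h
  · exact (hf.neg_of_isMinOn_abs hv hmv hw hwv).not_ge h
  · exact (hf.pos_of_isMinOn_abs hu hmu hw huw).not_gt h

end StrictMonoOn

theorem isMinOn_abs_neg_one_pow_mul_iff {α : Type*} {f : α → ℝ} {s : Set α} {a : α} (n : ℕ) :
    IsMinOn (fun x => |(-1) ^ n * f x|) s a ↔ IsMinOn (fun x => |f x|) s a := by
  simp only [abs_mul, abs_neg_one_pow, one_mul]

theorem eval_monicPoly (d : ℕ) (c : Fin d → ℝ) (x : ℝ) :
    (monicPoly d c).eval x = x ^ d + ∑ i : Fin d, c i * x ^ (i : ℕ) := by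
  simp [monicPoly, eval_finsetSum]

theorem continuous_eval_monicPoly (d : ℕ) :
    Continuous fun p : (Fin d → ℝ) × ℝ => (monicPoly d p.1).eval p.2 := by
  simp only [eval_monicPoly]
  fun_prop

theorem derivative_monicPoly {d : ℕ} (c : Fin (d + 1) → ℝ) :
    derivative (monicPoly (d + 1) c) = C ((d : ℝ) + 1) * monicPoly d (dCoeff c) := by
  simp only [monicPoly, derivative_add, derivative_X_pow, derivative_sum,
    derivative_C_mul_X_pow, Fin.sum_univ_succ, Fin.val_zero, Fin.val_succ, Nat.cast_zero,
    mul_zero, C_0, zero_mul, zero_add, Nat.add_sub_cancel, mul_add, Finset.mul_sum]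
  congr 1
  · push_cast
    rfl
  · refine Finset.sum_congr rfl fun i _ => ?_
    rw [dCoeff, ← mul_assoc, ← C_mul]
    congr 2
    push_cast
    field_simp

theorem continuous_dCoeff (d : ℕ) : Continuous fun c : Fin (d + 1) → ℝ => dCoeff c :=
  continuous_pi fun i => ((continuous_apply i.succ).mul continuous_const).div_const _

theorem one_le_bnd {d : ℕ} (c : Fin d → ℝ) : 1 ≤ bnd c :=
  le_add_of_nonneg_right (Real.iSup_nonneg fun i => abs_nonneg (c i))

theorem abs_le_bnd_sub_one {d : ℕ} (c : Fin d → ℝ) (i : Fin d) : |c i| ≤ bnd c - 1 := by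
  simpa [bnd] using le_ciSup (Set.finite_range fun i => |c i|).bddAbove i

theorem bnd_dCoeff_le {d : ℕ} (c : Fin (d + 1) → ℝ) : bnd (dCoeff c) ≤ bnd c := by
  suffices h : ⨆ i, |dCoeff c i| ≤ bnd c - 1 by rw [bnd]; linarith
  refine Real.iSup_le (fun i => ?_) (by linarith [one_le_bnd c])
  have hi : ((i : ℕ) : ℝ) + 1 ≤ d + 1 := by norm_cast; omega
  calc |dCoeff c i| = |c i.succ| * (((i : ℕ) + 1) / (d + 1)) := by
        rw [dCoeff, abs_div, abs_mul, mul_div_assoc]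
        congr 2 <;> exact abs_of_pos (by positivity)
    _ ≤ |c i.succ| * 1 := by gcongr; exact div_le_one_of_le₀ hi (by positivity)
    _ ≤ bnd c - 1 := by rw [mul_one]; exact abs_le_bnd_sub_one c i.succ

theorem continuous_bnd (d : ℕ) : Continuous fun c : Fin d → ℝ => bnd c := by
  refine continuous_const.add ?_
  rcases isEmpty_or_nonempty (Fin d) with h | h
  · simp only [Real.iSup_of_isEmpty]
    exact continuous_const
  · simp_rw [← Finset.sup'_univ_eq_ciSup]
    exact Continuous.finset_sup'_apply _ fun i _ => (continuous_apply i).abs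

theorem abs_sum_mul_pow_le {d : ℕ} (c : Fin d → ℝ) {x : ℝ} (hx : bnd c ≤ |x|) :
    |∑ i : Fin d, c i * x ^ (i : ℕ)| ≤ |x| ^ d - 1 :=
  calc |∑ i : Fin d, c i * x ^ (i : ℕ)|
      ≤ ∑ i : Fin d, (bnd c - 1) * |x| ^ (i : ℕ) := by
        refine (Finset.abs_sum_le_sum_abs _ _).trans (Finset.sum_le_sum fun i _ => ?_)
        rw [abs_mul, abs_pow]
        exact mul_le_mul_of_nonneg_right (abs_le_bnd_sub_one c i) (by positivity)
    _ ≤ ∑ i ∈ Finset.range d, (|x| - 1) * |x| ^ i := by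
        rw [Fin.sum_univ_eq_sum_range (fun i => (bnd c - 1) * |x| ^ i)]
        gcongr
    _ = |x| ^ d - 1 := by rw [← Finset.mul_sum, mul_comm, geom_sum_mul]

theorem eval_monicPoly_pos {d : ℕ} (c : Fin d → ℝ) {x : ℝ} (hx : bnd c ≤ x) :
    0 < (monicPoly d c).eval x := by
  have hx0 : 0 ≤ x := by linarith [one_le_bnd c]
  have h := abs_le.1 (abs_sum_mul_pow_le c (hx.trans (le_abs_self x)))
  rw [abs_of_nonneg hx0] at h
  rw [eval_monicPoly]
  linarith [h.1]

theorem neg_one_pow_mul_eval_monicPoly_pos {d : ℕ} (c : Fin d → ℝ) {x : ℝ}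
    (hx : x ≤ -bnd c) : 0 < (-1) ^ d * (monicPoly d c).eval x := by
  have hx0 : x ≤ 0 := by linarith [one_le_bnd c]
  have h := abs_le.1 (abs_sum_mul_pow_le c (x := x) (by rw [abs_of_nonpos hx0]; linarith))
  have hpow : (-1) ^ d * x ^ d = |x| ^ d := by rw [← mul_pow, abs_of_nonpos hx0]; ring
  rw [eval_monicPoly, mul_add, hpow]
  rcases neg_one_pow_eq_or ℝ d with he | he <;> rw [he] <;> linarith [h.1, h.2]

theorem Rmin_spec {a b : ℝ} (h : a ≤ b) (P : Polynomial ℝ) :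
    Rmin a b P ∈ Icc a b ∧ IsMinOn (fun x => |P.eval x|) (Icc a b) (Rmin a b P) := by
  rw [Rmin, dif_pos h]
  exact (isCompact_Icc.exists_isMinOn (Set.nonempty_Icc.mpr h)
    ((continuous_abs.comp P.continuous).continuousOn)).choose_spec

section VirtualRoots

variable {d : ℕ}

/-- `derivVroot c k` is `ρ_{d,k}(P'/(d+1))` for `P = monicPoly (d + 1) c`, extended by the Cauchy
bound of `P` at `k = 0` and `k = d + 1`. -/
noncomputable def derivVroot (c : Fin (d + 1) → ℝ) (k : ℕ) : ℝ :=
  if k = 0 then -bnd c else if k ≤ d then vroot d k (dCoeff c) else bnd c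

theorem vroot_succ (c : Fin (d + 1) → ℝ) {j : ℕ} (h1 : 1 ≤ j) (h2 : j ≤ d + 1) :
    vroot (d + 1) j c = Rmin (derivVroot c (j - 1)) (derivVroot c j) (monicPoly (d + 1) c) := by
  rw [vroot, derivVroot, derivVroot]
  congr 1
  · split_ifs <;> first | rfl | omega | (congr 1; omega)
  · split_ifs <;> first | rfl | omega

theorem derivVroot_of_pos_of_le (c : Fin (d + 1) → ℝ) {k : ℕ} (h1 : 1 ≤ k) (h2 : k ≤ d) :
    derivVroot c k = vroot d k (dCoeff c) := by
  rw [derivVroot, if_neg (by omega), if_pos h2]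

theorem continuous_derivVroot (h : ∀ k, 1 ≤ k → k ≤ d → Continuous fun c => vroot d k c) (k : ℕ) :
    Continuous fun c : Fin (d + 1) → ℝ => derivVroot c k :=
  continuous_if_const _ (fun _ => (continuous_bnd _).neg) fun hk =>
    continuous_if_const _ (fun hkd => (h k (by omega) hkd).comp (continuous_dCoeff d))
      fun _ => continuous_bnd _

def VrootsOrdered (d : ℕ) : Prop :=
  ∀ (c : Fin d → ℝ) (j : ℕ), 1 ≤ j → j ≤ d →
    vroot d j c ∈ Icc (-bnd c) (bnd c) ∧ (j < d → vroot d j c ≤ vroot d (j + 1) c)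

/-- The hypotheses `1 ≤ j → …` and `j < d → …` encode the conventions `ρ_0 = -∞`, `ρ_{d+1} = +∞`. -/
def VrootsAlternate (d : ℕ) : Prop :=
  ∀ (c : Fin d → ℝ) (j : ℕ) (x : ℝ), j ≤ d → (1 ≤ j → vroot d j c < x) →
    (j < d → x < vroot d (j + 1) c) → 0 < (-1) ^ (d - j) * (monicPoly d c).eval x

theorem VrootsOrdered.derivVroot_mem (h : VrootsOrdered d) (c : Fin (d + 1) → ℝ) (k : ℕ) :
    derivVroot c k ∈ Icc (-bnd c) (bnd c) := by
  have hb := bnd_dCoeff_le c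
  have h1 := one_le_bnd c
  rw [derivVroot]
  split_ifs with hk hkd
  · exact ⟨le_rfl, by linarith⟩
  · obtain ⟨⟨hlo, hhi⟩, -⟩ := h (dCoeff c) k (by omega) hkd
    exact ⟨by linarith, by linarith⟩
  · exact ⟨by linarith, le_rfl⟩

theorem VrootsOrdered.monotone_derivVroot (h : VrootsOrdered d) (c : Fin (d + 1) → ℝ) :
    Monotone (derivVroot c) := by
  refine monotone_nat_of_le_succ fun k => ?_
  rcases Nat.eq_zero_or_pos k with rfl | hk
  · exact (h.derivVroot_mem c 1).1
  rcases lt_or_ge k d with hkd | hkd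
  · rw [derivVroot_of_pos_of_le c hk hkd.le, derivVroot_of_pos_of_le c (by omega) hkd]
    exact_mod_cast (h (dCoeff c) k hk hkd.le).2 hkd
  · have hlast : derivVroot c (k + 1) = bnd c := by
      rw [derivVroot, if_neg (by omega), if_neg (by omega)]
    exact hlast ▸ (h.derivVroot_mem c k).2

theorem VrootsOrdered.vroot_succ_spec (h : VrootsOrdered d) (c : Fin (d + 1) → ℝ) {j : ℕ}
    (h1 : 1 ≤ j) (h2 : j ≤ d + 1) :
    vroot (d + 1) j c ∈ Icc (derivVroot c (j - 1)) (derivVroot c j) ∧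
      IsMinOn (fun x => |(monicPoly (d + 1) c).eval x|)
        (Icc (derivVroot c (j - 1)) (derivVroot c j)) (vroot (d + 1) j c) := by
  rw [vroot_succ c h1 h2]
  exact Rmin_spec (h.monotone_derivVroot c (Nat.sub_le j 1)) _

theorem VrootsOrdered.succ (h : VrootsOrdered d) : VrootsOrdered (d + 1) := by
  intro c j h1 h2
  have hmem := (h.vroot_succ_spec c h1 h2).1
  refine ⟨⟨(h.derivVroot_mem c _).1.trans hmem.1, hmem.2.trans (h.derivVroot_mem c j).2⟩,
    fun hj => ?_⟩
  have hnext := (h.vroot_succ_spec c (j := j + 1) (by omega) (by omega)).1.1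
  exact_mod_cast hmem.2.trans hnext

theorem vrootsOrdered : ∀ d, VrootsOrdered d
  | 0 => fun _ _ h1 h2 => absurd (h1.trans h2) (by norm_num)
  | d + 1 => (vrootsOrdered d).succ

/-- Between consecutive critical points of `P`, the derivative `P' = (d+1) Q` has constant sign
by the alternation of `Q`, so `±P` is strictly increasing there. -/
theorem VrootsAlternate.strictMonoOn (h : VrootsAlternate d) (c : Fin (d + 1) → ℝ) {j : ℕ}
    (h1 : 1 ≤ j) (h2 : j ≤ d + 1) :
    StrictMonoOn (fun x => (-1) ^ (d + 1 - j) * (monicPoly (d + 1) c).eval x)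
      (Icc (derivVroot c (j - 1)) (derivVroot c j)) := by
  refine strictMonoOn_of_deriv_pos (convex_Icc _ _) (by fun_prop) fun x hx => ?_
  rw [interior_Icc] at hx
  have hQ := h (dCoeff c) (j - 1) x (by omega)
    (fun hj => derivVroot_of_pos_of_le c hj (by omega) ▸ hx.1)
    (fun hj => by
      rw [show ((j - 1 : ℕ) : ℤ) + 1 = ((j : ℕ) : ℤ) by omega,
        ← derivVroot_of_pos_of_le c h1 (by omega)]
      exact hx.2)
  rw [((monicPoly (d + 1) c).hasDerivAt x |>.const_mul _).deriv, derivative_monicPoly, eval_mul,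
    eval_C, mul_left_comm, show d + 1 - j = d - (j - 1) by omega]
  positivity

theorem VrootsAlternate.succ (ho : VrootsOrdered d) (ha : VrootsAlternate d) :
    VrootsAlternate (d + 1) := by
  intro c j x hj hlo hhi
  -- `x` lies right of `ρ_j` in its interval, left of `ρ_{j+1}` in its interval, or outside the
  -- Cauchy interval.
  by_cases hR : 1 ≤ j ∧ x ≤ derivVroot c j
  · obtain ⟨hmem, hmin⟩ := ho.vroot_succ_spec c hR.1 hj
    exact (ha.strictMonoOn c hR.1 hj).pos_of_isMinOn_abs hmem
      ((isMinOn_abs_neg_one_pow_mul_iff _).2 hmin) ⟨hmem.1.trans (hlo hR.1).le, hR.2⟩ (hlo hR.1)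
  by_cases hL : j ≤ d ∧ derivVroot c j ≤ x
  · obtain ⟨hmem, hmin⟩ := ho.vroot_succ_spec c (j := j + 1) (by omega) (by omega)
    have hx : x < vroot (d + 1) (j + 1 : ℕ) c := by exact_mod_cast hhi (by omega)
    have hneg := (ha.strictMonoOn c (j := j + 1) (by omega) (by omega)).neg_of_isMinOn_abs hmem
      ((isMinOn_abs_neg_one_pow_mul_iff _).2 hmin) ⟨hL.2, hx.le.trans hmem.2⟩ hx
    rw [show d + 1 - j = d + 1 - (j + 1) + 1 by omega, pow_succ, mul_neg_one, neg_mul, neg_pos]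
    exact hneg
  rcases Nat.eq_zero_or_pos j with rfl | hj0
  · have hx : x < -bnd c := by simpa [derivVroot] using hL
    exact neg_one_pow_mul_eval_monicPoly_pos c hx.le
  · obtain rfl : j = d + 1 := by
      by_contra hjd
      have hxlt := not_and.1 hL (by omega)
      have hxgt := not_and.1 hR hj0
      linarith
    have hx : bnd c < x := by simpa [derivVroot] using hR
    simpa using eval_monicPoly_pos c hx.le

theorem vrootsAlternate : ∀ d, VrootsAlternate d
  | 0 => fun _ j _ hj _ _ => by simp [show j = 0 by omega, eval_monicPoly]
  | d + 1 => (vrootsAlternate d).succ (vrootsOrdered d)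

end VirtualRoots

/-- each virtual root function `ρ_{d,j}` is continuous on the
space `ℝ^d` of monic degree-`d` polynomials. -/
theorem vroot_continuous (d j : ℕ) (hj1 : 1 ≤ j) (hjd : j ≤ d) :
    Continuous fun c : Fin d → ℝ => vroot d (j : ℤ) c := by
  induction d generalizing j with
  | zero => omega
  | succ d ih =>
    have hspec := fun c => (vrootsOrdered d).vroot_succ_spec c hj1 hjd
    refine continuous_of_unique_isMinOn_Icc
      (F := fun c x => |(monicPoly (d + 1) c).eval x|) (continuous_eval_monicPoly (d + 1)).abs
      (continuous_derivVroot ih _) (continuous_derivVroot ih _) (fun c => (hspec c).1)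
      (fun c => (hspec c).2) fun c y hy hmin => ?_
    exact ((vrootsAlternate d).strictMonoOn c hj1 hjd).eq_of_isMinOn_abs hy (hspec c).1
      ((isMinOn_abs_neg_one_pow_mul_iff _).2 hmin)
      ((isMinOn_abs_neg_one_pow_mul_iff _).2 (hspec c).2)
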